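/- The space of linear embeddings of a finite-dimensional real vector space V into ℝ^∞ = colim ℝ^n is contractible. -/

import Mathlib

noncomputable section

variable (V : Type) [AddCommGroup V] [Module ℝ V] [FiniteDimensional ℝ V]

/-- The space of linear embeddings of `V` into `ℝⁿ`, topologized by pointwise
convergence. -/
def EmbFin (n : ℕ) := {f : V →ₗ[ℝ] (Fin n → ℝ) // Function.Injective f}

instance (n : ℕ) : TopologicalSpace (EmbFin V n) :=
  TopologicalSpace.induced (fun f : EmbFin V n => (f.1 : V → Fin n → ℝ)) inferInstance

/-- The space of linear embeddings of `V` into `ℝ^∞ = colim ℝⁿ` (realized as the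
finitely supported sequences `ℕ →₀ ℝ`). -/
def EmbInf := {f : V →ₗ[ℝ] (ℕ →₀ ℝ) // Function.Injective f}

/-- The inclusion of the space of embeddings into `ℝⁿ` into the space of embeddings
into `ℝ^∞`, via the standard inclusion `ℝⁿ ⊆ ℝ^∞`. -/
def extendEmb (n : ℕ) (f : EmbFin V n) : EmbInf V :=
  ⟨(Finsupp.lmapDomain ℝ ℝ (Fin.val : Fin n → ℕ)) ∘ₗ
      ((Finsupp.linearEquivFunOnFinite ℝ ℝ (Fin n)).symm.toLinearMap ∘ₗ f.1), by
    have h1 : Function.Injective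
        (Finsupp.mapDomain (Fin.val : Fin n → ℕ) : (Fin n →₀ ℝ) → (ℕ →₀ ℝ)) :=
      Finsupp.mapDomain_injective Fin.val_injective
    exact h1.comp ((Finsupp.linearEquivFunOnFinite ℝ ℝ (Fin n)).symm.injective.comp f.2)⟩

/-- `EmbInf` carries the colimit (weak) topology induced by the spaces of embeddings
`V → ℝⁿ`. -/
instance : TopologicalSpace (EmbInf V) :=
  ⨆ n : ℕ, TopologicalSpace.coinduced (extendEmb V n) inferInstance

/-!
Push an embedding `g` onto the even coordinates along the straight line
`(1 - t) • g + t • evenShift ∘ g`, where `evenShift eₖ = e₂ₖ`: this stays injective because the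
top coordinate `N` of a nonzero vector `x` is moved to `2N`, where `x` itself vanishes. Then move
`evenShift ∘ g` along a straight line to a fixed embedding into the odd coordinates; the two ends
have ranges in complementary sets of coordinates, so every intermediate map is injective. Both
homotopies send each finite stage `ℝⁿ` continuously into a finite stage, which gives continuity
for the colimit topology on `I × EmbInf V` because `I` is locally compact.
-/

open Function Finsupp Set Topology unitInterval

section Algebra

theorem injective_sub_smul_add_smul_of_disjoint {R M N : Type*} [CommRing R] [AddCommGroup M]
    [Module R M] [AddCommGroup N] [Module R N] {f g : M →ₗ[R] N} (hf : Injective f)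
    (hg : Injective g) (hfg : Disjoint (LinearMap.range f) (LinearMap.range g)) (t : R) :
    Injective ((1 - t) • f + t • g) := by
  rw [injective_iff_map_eq_zero]
  intro v hv
  have hsum : f ((1 - t) • v) = g (-(t • v)) := by
    simpa [add_eq_zero_iff_eq_neg] using hv
  have hf0 : f ((1 - t) • v) = 0 :=
    Submodule.disjoint_def.1 hfg _ ⟨_, rfl⟩ (hsum ▸ ⟨_, rfl⟩)
  have hg0 : g (-(t • v)) = 0 := hsum ▸ hf0
  rw [← map_zero f] at hf0
  rw [← map_zero g] at hg0
  have h1 : (1 - t) • v = 0 := hf hf0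
  have h2 : t • v = 0 := neg_eq_zero.1 (hg hg0)
  simpa [sub_smul, h2] using h1

def evenShift : (ℕ →₀ ℝ) →ₗ[ℝ] (ℕ →₀ ℝ) := lmapDomain ℝ ℝ (2 * ·)

theorem evenShift_apply_two_mul (x : ℕ →₀ ℝ) (k : ℕ) : evenShift x (2 * k) = x k :=
  mapDomain_apply (mul_right_injective₀ two_ne_zero) x k

theorem evenShift_apply (x : ℕ →₀ ℝ) (k : ℕ) :
    evenShift x k = if 2 ∣ k then x (k / 2) else 0 := by
  split_ifs with hk
  · obtain ⟨j, rfl⟩ := hk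
    simp [evenShift_apply_two_mul]
  · exact mapDomain_of_notMem_range x k (by rintro ⟨j, rfl⟩; exact hk ⟨j, rfl⟩)

theorem evenShift_injective : Injective evenShift :=
  mapDomain_injective (mul_right_injective₀ two_ne_zero)

theorem range_evenShift : LinearMap.range evenShift ≤ supported ℝ ℝ {k | Even k} := by
  rw [LinearMap.range_eq_map, ← supported_univ, evenShift, lmapDomain_supported]
  exact supported_mono (by rintro _ ⟨j, -, rfl⟩; exact even_two_mul j)

theorem evenShift_mem_supported_Iio {x : ℕ →₀ ℝ} {n : ℕ} (hx : x ∈ supported ℝ ℝ (Iio n)) :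
    evenShift x ∈ supported ℝ ℝ (Iio (2 * n)) :=
  supported_comap_lmapDomain ℝ ℝ _ _ (supported_mono (fun k (hk : k < n) => by
    simp only [mem_preimage, mem_Iio]; omega) hx)

theorem injective_sub_smul_add_smul_evenShift (t : ℝ) :
    Injective ((1 - t) • LinearMap.id + t • evenShift : (ℕ →₀ ℝ) →ₗ[ℝ] (ℕ →₀ ℝ)) := by
  rw [injective_iff_map_eq_zero]
  intro x hx
  by_contra hx0
  set N := x.support.max' (support_nonempty_iff.2 hx0)
  have hN : x N ≠ 0 := mem_support_iff.1 (x.support.max'_mem _)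
  have h2N : (1 - t) * x (2 * N) + t * x N = 0 := by
    simpa [evenShift_apply_two_mul] using DFunLike.congr_fun hx (2 * N)
  rcases Nat.eq_zero_or_pos N with hN0 | hNpos
  · exact hN (by rw [hN0] at h2N ⊢; linarith)
  have hx2N : x (2 * N) = 0 :=
    notMem_support_iff.1 fun h => by have := x.support.le_max' _ h; omega
  have ht : t = 0 := by simpa [hx2N, hN] using h2N
  exact hx0 (by simpa [ht] using hx)

def oddEmbedding (E : Type*) [AddCommGroup E] [Module ℝ E] [FiniteDimensional ℝ E] :
    E →ₗ[ℝ] (ℕ →₀ ℝ) :=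
  lmapDomain ℝ ℝ (fun i : Fin (Module.finrank ℝ E) => 2 * (i : ℕ) + 1) ∘ₗ
    (Module.finBasis ℝ E).repr.toLinearMap

variable (E : Type*) [AddCommGroup E] [Module ℝ E] [FiniteDimensional ℝ E]

theorem oddEmbedding_injective : Injective (oddEmbedding E) := by
  have hodd : Injective fun i : Fin (Module.finrank ℝ E) => 2 * (i : ℕ) + 1 :=
    fun i j h => Fin.ext (by simpa using h)
  exact (mapDomain_injective hodd).comp (Module.finBasis ℝ E).repr.injective

theorem range_oddEmbedding : LinearMap.range (oddEmbedding E) ≤ supported ℝ ℝ {k | Odd k} := by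
  rw [oddEmbedding, LinearMap.range_comp, LinearEquiv.range, ← supported_univ,
    lmapDomain_supported]
  exact supported_mono (by rintro _ ⟨i, -, rfl⟩; exact odd_two_mul_add_one _)

theorem exists_forall_mem_supported_Iio (g : E →ₗ[ℝ] (ℕ →₀ ℝ)) :
    ∃ m, ∀ v, g v ∈ supported ℝ ℝ (Iio m) := by
  obtain ⟨S, hS⟩ := Module.Finite.fg_top (R := ℝ) (M := E)
  obtain ⟨m, hm⟩ := (S.biUnion fun v => (g v).support).exists_nat_subset_range
  have hspan : Submodule.span ℝ (S : Set E) ≤ (supported ℝ ℝ (Iio m)).comap g :=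
    Submodule.span_le.2 fun v hv k hk => by
      simpa using hm (Finset.mem_biUnion.2 ⟨v, hv, hk⟩)
  exact ⟨m, fun v => hspan (hS ▸ Submodule.mem_top)⟩

end Algebra

section Colimit

variable {E : Type} [AddCommGroup E] [Module ℝ E]

def finInclusion (n : ℕ) : (Fin n → ℝ) →ₗ[ℝ] (ℕ →₀ ℝ) :=
  lmapDomain ℝ ℝ (Fin.val : Fin n → ℕ) ∘ₗ (linearEquivFunOnFinite ℝ ℝ (Fin n)).symm.toLinearMap

def truncate (n : ℕ) : (ℕ →₀ ℝ) →ₗ[ℝ] (Fin n → ℝ) :=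
  LinearMap.pi fun i : Fin n => lapply (i : ℕ)

theorem finInclusion_apply {n : ℕ} (x : Fin n → ℝ) (k : ℕ) :
    finInclusion n x k = if h : k < n then x ⟨k, h⟩ else 0 := by
  split_ifs with h
  · exact mapDomain_apply Fin.val_injective _ (⟨k, h⟩ : Fin n)
  · exact mapDomain_of_notMem_range _ k (by rintro ⟨i, rfl⟩; exact h i.isLt)

theorem finInclusion_mem_supported_Iio {n : ℕ} (x : Fin n → ℝ) :
    finInclusion n x ∈ supported ℝ ℝ (Iio n) :=
  (mem_supported' _ _).2 fun k hk => by rw [finInclusion_apply, dif_neg (by simpa using hk)]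

theorem finInclusion_truncate {n : ℕ} {x : ℕ →₀ ℝ} (hx : x ∈ supported ℝ ℝ (Iio n)) :
    finInclusion n (truncate n x) = x := by
  ext k
  rw [finInclusion_apply]
  split_ifs with h
  · rfl
  · exact ((mem_supported' _ _).1 hx k h).symm

theorem extendEmb_val {n : ℕ} (f : EmbFin E n) : (extendEmb E n f).1 = finInclusion n ∘ₗ f.1 :=
  rfl

def EmbInf.restrict (g : EmbInf E) {m : ℕ} (hg : ∀ v, g.1 v ∈ supported ℝ ℝ (Iio m)) :
    EmbFin E m :=
  ⟨truncate m ∘ₗ g.1, fun v w h => g.2 <| by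
    simpa [finInclusion_truncate (hg _)] using congrArg (finInclusion m) h⟩

theorem extendEmb_restrict (g : EmbInf E) {m : ℕ} (hg : ∀ v, g.1 v ∈ supported ℝ ℝ (Iio m)) :
    extendEmb E m (g.restrict hg) = g :=
  Subtype.ext <| LinearMap.ext fun v => finInclusion_truncate (hg v)

theorem continuous_extendEmb (n : ℕ) : Continuous (extendEmb E n) :=
  continuous_iSup_rng (i := n) continuous_coinduced_rng

theorem continuous_embFin_apply {n : ℕ} (v : E) (i : Fin n) :
    Continuous fun f : EmbFin E n => f.1 v i :=
  (continuous_apply i).comp ((continuous_apply v).comp continuous_induced_dom)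

theorem continuous_extendEmb_apply (n : ℕ) (v : E) (k : ℕ) :
    Continuous fun f : EmbFin E n => (extendEmb E n f).1 v k := by
  simp only [extendEmb_val, LinearMap.comp_apply, finInclusion_apply]
  by_cases h : k < n
  · simpa [h] using continuous_embFin_apply v ⟨k, h⟩
  · simpa [h] using continuous_const

theorem continuous_of_forall_mem_supported_Iio {Y : Type*} [TopologicalSpace Y]
    {Φ : Y → EmbInf E} {m : ℕ} (hsupp : ∀ y v, (Φ y).1 v ∈ supported ℝ ℝ (Iio m))
    (hcont : ∀ v k, Continuous fun y => (Φ y).1 v k) : Continuous Φ := by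
  have hΦ : Φ = fun y => extendEmb E m ((Φ y).restrict (hsupp y)) :=
    funext fun y => (extendEmb_restrict _ _).symm
  rw [hΦ]
  refine (continuous_extendEmb m).comp (continuous_induced_rng.2 ?_)
  exact continuous_pi fun v => continuous_pi fun i => hcont v i

variable [FiniteDimensional ℝ E]

theorem extendEmb_surjective : Surjective fun p : Σ n, EmbFin E n => extendEmb E p.1 p.2 := by
  intro g
  obtain ⟨m, hm⟩ := exists_forall_mem_supported_Iio E g.1
  exact ⟨⟨m, g.restrict hm⟩, extendEmb_restrict g hm⟩

theorem isQuotientMap_extendEmb :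
    IsQuotientMap fun p : Σ n, EmbFin E n => extendEmb E p.1 p.2 := by
  refine ⟨⟨?_⟩, extendEmb_surjective⟩
  change (⨆ n, TopologicalSpace.coinduced (extendEmb E n) inferInstance) =
    TopologicalSpace.coinduced _ instTopologicalSpaceSigma
  rw [instTopologicalSpaceSigma, coinduced_iSup]
  exact iSup_congr fun n => by rw [coinduced_compose]; rfl

theorem continuous_prod_of_forall_extendEmb {X Z : Type*} [TopologicalSpace X]
    [LocallyCompactSpace X] [TopologicalSpace Z] {Φ : X × EmbInf E → Z}
    (h : ∀ n, Continuous fun p : X × EmbFin E n => Φ (p.1, extendEmb E n p.2)) :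
    Continuous Φ := by
  refine isQuotientMap_extendEmb.continuous_lift_prod_right ?_
  have hsigma : Continuous fun q : Σ n, EmbFin E n × X => Φ (q.2.2, extendEmb E q.1 q.2.1) :=
    continuous_sigma fun n => (h n).comp continuous_swap
  exact hsigma.comp (Homeomorph.sigmaProdDistrib.continuous.comp continuous_swap)

end Colimit

section Swindle

variable {E : Type} [AddCommGroup E] [Module ℝ E]

def IsStagewiseContinuous (F : EmbInf E → E →ₗ[ℝ] (ℕ →₀ ℝ)) : Prop :=
  ∀ n, ∃ m, (∀ f v, F (extendEmb E n f) v ∈ supported ℝ ℝ (Iio m)) ∧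
    ∀ v k, Continuous fun f : EmbFin E n => F (extendEmb E n f) v k

theorem isStagewiseContinuous_val : IsStagewiseContinuous fun g : EmbInf E => g.1 :=
  fun n => ⟨n, fun _ _ => finInclusion_mem_supported_Iio _, continuous_extendEmb_apply n⟩

theorem IsStagewiseContinuous.evenShift_comp {F : EmbInf E → E →ₗ[ℝ] (ℕ →₀ ℝ)}
    (hF : IsStagewiseContinuous F) : IsStagewiseContinuous fun g => evenShift ∘ₗ F g := by
  intro n
  obtain ⟨m, hsupp, hcont⟩ := hF n
  refine ⟨2 * m, fun f v => evenShift_mem_supported_Iio (hsupp f v), fun v k => ?_⟩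
  simp only [LinearMap.comp_apply, evenShift_apply]
  by_cases hk : 2 ∣ k
  · simpa [hk] using hcont v (k / 2)
  · simpa [hk] using continuous_const

theorem isStagewiseContinuous_const [FiniteDimensional ℝ E] (j : E →ₗ[ℝ] (ℕ →₀ ℝ)) :
    IsStagewiseContinuous fun _ : EmbInf E => j := by
  obtain ⟨m, hm⟩ := exists_forall_mem_supported_Iio E j
  exact fun _ => ⟨m, fun _ => hm, fun _ _ => continuous_const⟩

variable [FiniteDimensional ℝ E] {F G : EmbInf E → E →ₗ[ℝ] (ℕ →₀ ℝ)}

def lineHomotopy (hF : IsStagewiseContinuous F) (hG : IsStagewiseContinuous G)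
    (hinj : ∀ (t : ℝ) g, Injective ((1 - t) • F g + t • G g)) : C(I × EmbInf E, EmbInf E) where
  toFun p := ⟨(1 - (p.1 : ℝ)) • F p.2 + (p.1 : ℝ) • G p.2, hinj _ _⟩
  continuous_toFun := by
    refine continuous_prod_of_forall_extendEmb fun n => ?_
    obtain ⟨m₁, hsupp₁, hcont₁⟩ := hF n
    obtain ⟨m₂, hsupp₂, hcont₂⟩ := hG n
    refine continuous_of_forall_mem_supported_Iio (m := max m₁ m₂) (fun p v => ?_) fun v k => ?_
    · exact add_mem
        (Submodule.smul_mem _ _ (supported_mono (Iio_subset_Iio (le_max_left _ _)) (hsupp₁ _ _)))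
        (Submodule.smul_mem _ _ (supported_mono (Iio_subset_Iio (le_max_right _ _)) (hsupp₂ _ _)))
    · have ht : Continuous fun p : I × EmbFin E n => (p.1 : ℝ) :=
        continuous_subtype_val.comp continuous_fst
      simp only [LinearMap.add_apply, LinearMap.smul_apply, Finsupp.add_apply,
        Finsupp.smul_apply, smul_eq_mul]
      exact ((continuous_const.sub ht).mul ((hcont₁ v k).comp continuous_snd)).add
        (ht.mul ((hcont₂ v k).comp continuous_snd))

variable (hF : IsStagewiseContinuous F) (hG : IsStagewiseContinuous G)
  (hinj : ∀ (t : ℝ) g, Injective ((1 - t) • F g + t • G g))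

theorem lineHomotopy_zero (g : EmbInf E) : (lineHomotopy hF hG hinj (0, g)).1 = F g := by
  change (1 - ((0 : I) : ℝ)) • F g + ((0 : I) : ℝ) • G g = F g
  simp

theorem lineHomotopy_one (g : EmbInf E) : (lineHomotopy hF hG hinj (1, g)).1 = G g := by
  change (1 - ((1 : I) : ℝ)) • F g + ((1 : I) : ℝ) • G g = G g
  simp

def shiftHomotopy : C(I × EmbInf E, EmbInf E) :=
  lineHomotopy isStagewiseContinuous_val isStagewiseContinuous_val.evenShift_comp
    fun t g => by
      have h := (injective_sub_smul_add_smul_evenShift t).comp g.2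
      rwa [← LinearMap.coe_comp, LinearMap.add_comp, LinearMap.smul_comp, LinearMap.smul_comp,
        LinearMap.id_comp] at h

def oddHomotopy : C(I × EmbInf E, EmbInf E) :=
  lineHomotopy isStagewiseContinuous_val.evenShift_comp
    (isStagewiseContinuous_const (oddEmbedding E)) fun t g => by
      have hshift : Injective (evenShift ∘ₗ g.1) := by
        rw [LinearMap.coe_comp]
        exact evenShift_injective.comp g.2
      have hdisj : Disjoint {k : ℕ | Even k} {k | Odd k} :=
        Set.disjoint_left.2 fun _ he ho => Nat.not_even_iff_odd.2 ho he
      refine injective_sub_smul_add_smul_of_disjoint hshift (oddEmbedding_injective E) ?_ t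
      exact (disjoint_supported_supported hdisj).mono
        ((LinearMap.range_comp_le_range _ _).trans range_evenShift) (range_oddEmbedding E)

theorem homotopic_id_evenShift :
    (ContinuousMap.id (EmbInf E)).Homotopic (shiftHomotopy.curry 1) :=
  ⟨⟨shiftHomotopy, fun _ => Subtype.ext (lineHomotopy_zero ..), fun _ => rfl⟩⟩

theorem homotopic_evenShift_oddEmbedding :
    (shiftHomotopy.curry 1).Homotopic
      (ContinuousMap.const (EmbInf E) ⟨oddEmbedding E, oddEmbedding_injective E⟩) :=
  ⟨⟨oddHomotopy, fun g => Subtype.ext <| by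
      change (oddHomotopy (0, g)).1 = (shiftHomotopy (1, g)).1
      rw [oddHomotopy, shiftHomotopy, lineHomotopy_zero, lineHomotopy_one],
    fun _ => Subtype.ext (lineHomotopy_one ..)⟩⟩

end Swindle

/-- The space of linear embeddings of a finite-dimensional real vector space `V` into
`ℝ^∞`, with the colimit topology, is contractible. -/
theorem embInf_contractible : ContractibleSpace (EmbInf V) := by
  rw [contractible_iff_id_nullhomotopic]
  exact ⟨_, homotopic_id_evenShift.trans homotopic_evenShift_oddEmbedding⟩

end
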